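/- Let n ∈ ℕ and let T : ℝ[x₁,…,xₙ] → ℝ[x₁,…,xₙ] be a linear map. Then the following are equivalent: (i) T is diagonal, i.e., there exists a real sequence (t_α)_{α∈ℕ₀ⁿ} with T x^α = t_α · x^α for all α ∈ ℕ₀ⁿ; (ii) there exists a unique real sequence (c_α)_{α∈ℕ₀ⁿ} such that T p = Σ_{α∈ℕ₀ⁿ} (c_α/α!) · x^α · ∂^α p for all p ∈ ℝ[x₁,…,xₙ] (for each p the sum is finite). Moreover, if these hold, the sequences are related by t_α = Σ_{β ≤ α} C(α,β) · c_β and c_α = Σ_{β ≤ α} (−1)^{|α−β|} · C(α,β) · t_β for all α ∈ ℕ₀ⁿ, where β ≤ α means β_j ≤ α_j for all j and C(α,β) = Π_j C(α_j,β_j) is the product of binomial coefficients. -/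

import Mathlib

/-!
Since `x^α ∂^α x^γ = α! C(γ,α) x^γ`, the operator `Σ_α (c_α/α!) x^α ∂^α` is diagonal, with
eigenvalue `Σ_{β ≤ γ} C(γ,β) c_β` on `x^γ`: the multivariate binomial transform of `c`. A diagonal
operator is determined by its eigenvalues, and the binomial transform is inverted by the signed one,
because `Σ_{δ ≤ β ≤ α} (-1)^{|β-δ|} C(α,β) C(β,δ) = [δ = α]`. This sum factors over the coordinates,
and in one variable it reduces, via `C(m,b) C(b,j) = C(m,j) C(m-j,b-j)`, to the vanishing of the
alternating sum of the binomial coefficients `C(m-j, ·)` for `j < m`.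
-/

open MvPolynomial Finset

/-- The iterated partial derivative operator `∂^α = ∂₁^{α₁}⋯∂ₙ^{αₙ}` on `ℝ[x₁,…,xₙ]`. -/
noncomputable def pdPow {n : ℕ} (α : Fin n →₀ ℕ) :
    Module.End ℝ (MvPolynomial (Fin n) ℝ) :=
  (List.ofFn fun i : Fin n =>
    ((pderiv i : Derivation ℝ (MvPolynomial (Fin n) ℝ) (MvPolynomial (Fin n) ℝ)).toLinearMap) ^ (α i)).prod

section BinomialInversion

variable {ι R : Type*} [Fintype ι] [DecidableEq ι] [CommRing R]

lemma sum_Icc_prod_apply_eq_prod_sum_Icc {M : Type*} [CommSemiring M] (f : ι → ℕ → M)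
    (δ α : ι →₀ ℕ) :
    ∑ β ∈ Icc δ α, ∏ i, f i (β i) = ∏ i, ∑ b ∈ Icc (δ i) (α i), f i b := by
  rw [prod_univ_sum]
  refine sum_equiv Finsupp.equivFunOnFinite (fun β => ?_) (fun _ _ => rfl)
  simp [Fintype.mem_piFinset, Finsupp.le_def, forall_and]

lemma sum_Iic_sum_Iic_eq_sum_Iic_sum_Icc {P M : Type*} [Preorder P] [LocallyFiniteOrder P]
    [LocallyFiniteOrderBot P] [AddCommMonoid M] (f : P → P → M) (a : P) :
    ∑ b ∈ Iic a, ∑ d ∈ Iic b, f b d = ∑ d ∈ Iic a, ∑ b ∈ Icc d a, f b d :=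
  sum_comm' fun b d => by
    simp only [mem_Iic, mem_Icc]
    exact ⟨fun ⟨hba, hdb⟩ => ⟨⟨hdb, hba⟩, hdb.trans hba⟩, fun ⟨⟨hdb, hba⟩, _⟩ => ⟨hba, hdb⟩⟩

omit [Fintype ι] [DecidableEq ι] in
lemma Nat.sum_Icc_neg_one_pow_mul_choose_mul_choose (j m : ℕ) :
    ∑ b ∈ Icc j m, (-1 : R) ^ (b - j) * (m.choose b * b.choose j) = if j = m then 1 else 0 := by
  rcases lt_or_ge m j with hmj | hjm
  · rw [Icc_eq_empty (by omega), sum_empty, if_neg (by omega)]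
  have hchoose : ∀ e ∈ range (m - j + 1),
      (-1 : R) ^ (j + e - j) * (m.choose (j + e) * (j + e).choose j) =
        m.choose j * ((-1) ^ e * (m - j).choose e) := fun e _ => by
    have h := Nat.choose_mul (n := m) (k := j + e) (s := j) (by omega)
    rw [Nat.add_sub_cancel_left] at h ⊢
    rw [← Nat.cast_mul, h]
    push_cast
    ring
  have halt : ∑ e ∈ range (m - j + 1), (-1 : R) ^ e * (m - j).choose e =
      if m - j = 0 then 1 else 0 := by
    exact_mod_cast congrArg (Int.cast : ℤ → R) (Int.alternating_sum_range_choose (n := m - j))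
  rw [← Ico_add_one_right_eq_Icc, sum_Ico_eq_sum_range, Nat.sub_add_comm hjm,
    sum_congr rfl hchoose, ← mul_sum, halt]
  rcases eq_or_ne j m with rfl | hne
  · simp
  · rw [if_neg (by omega), if_neg hne, mul_zero]

lemma sum_Icc_neg_one_pow_mul_prod_choose_mul_prod_choose (δ α : ι →₀ ℕ) :
    ∑ β ∈ Icc δ α, (-1 : R) ^ (∑ i, (β i - δ i)) *
      ((∏ i, ((α i).choose (β i) : R)) * ∏ i, ((β i).choose (δ i) : R)) =
      if δ = α then 1 else 0 := by
  have hfactor : ∀ β : ι →₀ ℕ, (-1 : R) ^ (∑ i, (β i - δ i)) *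
      ((∏ i, ((α i).choose (β i) : R)) * ∏ i, ((β i).choose (δ i) : R)) =
      ∏ i, (-1 : R) ^ (β i - δ i) * ((α i).choose (β i) * (β i).choose (δ i)) := fun β => by
    rw [prod_mul_distrib, prod_mul_distrib, prod_pow_eq_pow_sum]
  simp_rw [hfactor]
  rw [sum_Icc_prod_apply_eq_prod_sum_Icc
    (fun i b => (-1 : R) ^ (b - δ i) * ((α i).choose b * b.choose (δ i)))]
  simp_rw [Nat.sum_Icc_neg_one_pow_mul_choose_mul_choose]
  rw [prod_boole]
  simp [DFunLike.ext_iff]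

omit [DecidableEq ι] in
lemma neg_one_pow_sum_tsub_eq_mul {δ β α : ι →₀ ℕ} (hδβ : δ ≤ β) (hβα : β ≤ α) :
    (-1 : R) ^ (∑ i, (α i - β i)) = (-1) ^ (∑ i, (α i - δ i)) * (-1) ^ (∑ i, (β i - δ i)) := by
  have hsum : ∑ i, (α i - δ i) = ∑ i, (α i - β i) + ∑ i, (β i - δ i) := by
    rw [← sum_add_distrib]
    exact sum_congr rfl fun i _ => by have := hδβ i; have := hβα i; omega
  rw [hsum, pow_add, mul_assoc, ← pow_add, Even.neg_one_pow ⟨_, rfl⟩, mul_one]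

lemma sum_Icc_neg_one_pow_mul_prod_choose_mul_prod_choose' (δ α : ι →₀ ℕ) :
    ∑ β ∈ Icc δ α, (-1 : R) ^ (∑ i, (α i - β i)) *
      ((∏ i, ((α i).choose (β i) : R)) * ∏ i, ((β i).choose (δ i) : R)) =
      if δ = α then 1 else 0 := by
  have hsign : ∀ β ∈ Icc δ α, (-1 : R) ^ (∑ i, (α i - β i)) *
      ((∏ i, ((α i).choose (β i) : R)) * ∏ i, ((β i).choose (δ i) : R)) =
      (-1) ^ (∑ i, (α i - δ i)) * ((-1 : R) ^ (∑ i, (β i - δ i)) *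
      ((∏ i, ((α i).choose (β i) : R)) * ∏ i, ((β i).choose (δ i) : R))) := fun β hβ => by
    rw [mem_Icc] at hβ
    rw [neg_one_pow_sum_tsub_eq_mul hβ.1 hβ.2, mul_assoc]
  rw [sum_congr rfl hsign, ← mul_sum, sum_Icc_neg_one_pow_mul_prod_choose_mul_prod_choose]
  split_ifs with h
  · simp [h]
  · rw [mul_zero]

noncomputable def binomialTransform (c : (ι →₀ ℕ) → R) (α : ι →₀ ℕ) : R :=
  ∑ β ∈ Iic α, (∏ i, ((α i).choose (β i) : R)) * c β

noncomputable def invBinomialTransform (t : (ι →₀ ℕ) → R) (α : ι →₀ ℕ) : R :=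
  ∑ β ∈ Iic α, (-1 : R) ^ (∑ i, (α i - β i)) * (∏ i, ((α i).choose (β i) : R)) * t β

theorem invBinomialTransform_binomialTransform (c : (ι →₀ ℕ) → R) :
    invBinomialTransform (binomialTransform c) = c := by
  funext α
  simp only [invBinomialTransform, binomialTransform, mul_sum]
  rw [sum_Iic_sum_Iic_eq_sum_Iic_sum_Icc]
  simp_rw [← mul_assoc, ← sum_mul]
  have horth : ∀ δ, ∑ β ∈ Icc δ α, (-1) ^ (∑ i, (α i - β i)) * (∏ i, ((α i).choose (β i) : R)) *
      ∏ i, ((β i).choose (δ i) : R) = if δ = α then 1 else 0 := fun δ => by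
    rw [← sum_Icc_neg_one_pow_mul_prod_choose_mul_prod_choose']
    exact sum_congr rfl fun β _ => mul_assoc _ _ _
  simp_rw [horth, ite_mul, one_mul, zero_mul, sum_ite_eq', mem_Iic, le_rfl, if_true]

theorem binomialTransform_invBinomialTransform (t : (ι →₀ ℕ) → R) :
    binomialTransform (invBinomialTransform t) = t := by
  funext α
  simp only [invBinomialTransform, binomialTransform, mul_sum]
  rw [sum_Iic_sum_Iic_eq_sum_Iic_sum_Icc]
  simp_rw [← mul_assoc, ← sum_mul]
  have horth : ∀ δ, ∑ β ∈ Icc δ α, (∏ i, ((α i).choose (β i) : R)) * (-1) ^ (∑ i, (β i - δ i)) *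
      ∏ i, ((β i).choose (δ i) : R) = if δ = α then 1 else 0 := fun δ => by
    rw [← sum_Icc_neg_one_pow_mul_prod_choose_mul_prod_choose]
    exact sum_congr rfl fun β _ => by ring
  simp_rw [horth, ite_mul, one_mul, zero_mul, sum_ite_eq', mem_Iic, le_rfl, if_true]

omit [DecidableEq ι] in
lemma prod_choose_eq_zero_of_not_le {α γ : ι →₀ ℕ} (h : ¬α ≤ γ) :
    ∏ i, ((γ i).choose (α i) : R) = 0 := by
  obtain ⟨i, hi⟩ := not_forall.mp (mt Finsupp.le_def.mpr h)
  exact prod_eq_zero (mem_univ i) (by rw [Nat.choose_eq_zero_of_lt (by omega), Nat.cast_zero])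

lemma support_prod_choose_mul_subset_Iic (c : (ι →₀ ℕ) → R) (γ : ι →₀ ℕ) :
    (Function.support fun α => (∏ i, ((γ i).choose (α i) : R)) * c α) ⊆ Iic γ := by
  intro α hα
  by_contra hαγ
  refine hα ?_
  dsimp only
  rw [prod_choose_eq_zero_of_not_le (by simpa using hαγ), zero_mul]

lemma finsum_prod_choose_mul_eq_binomialTransform (c : (ι →₀ ℕ) → R) (γ : ι →₀ ℕ) :
    ∑ᶠ α, (∏ i, ((γ i).choose (α i) : R)) * c α = binomialTransform c γ :=
  finsum_eq_sum_of_support_subset _ (support_prod_choose_mul_subset_Iic c γ)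

end BinomialInversion

section PartialDerivatives

variable {σ R : Type*} [CommSemiring R]

lemma pderiv_pow_monomial (i : σ) (k : ℕ) (δ : σ →₀ ℕ) (r : R) :
    ((pderiv i : Derivation R (MvPolynomial σ R) (MvPolynomial σ R)).toLinearMap ^ k)
      (monomial δ r) = ((δ i).descFactorial k : R) • monomial (δ - Finsupp.single i k) r := by
  induction k with
  | zero => simp
  | succ k ih =>
    rw [pow_succ', Module.End.mul_apply, ih, map_smul, Derivation.coeFn_coe,
      pderiv_monomial, smul_monomial, smul_monomial, Finsupp.tsub_apply, Finsupp.single_eq_same,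
      tsub_tsub, ← Finsupp.single_add, Nat.descFactorial_succ]
    congr 1
    push_cast
    ring

lemma list_prod_map_pderiv_pow_monomial [DecidableEq σ] (k : σ → ℕ) {l : List σ} (hl : l.Nodup)
    (γ : σ →₀ ℕ) (r : R) :
    (l.map fun i => (pderiv i : Derivation R (MvPolynomial σ R) (MvPolynomial σ R)).toLinearMap
      ^ k i).prod (monomial γ r) =
      ((∏ i ∈ l.toFinset, (γ i).descFactorial (k i) : ℕ) : R) •
        monomial (γ - ∑ i ∈ l.toFinset, Finsupp.single i (k i)) r := by
  induction l with
  | nil => simp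
  | cons i l ih =>
    obtain ⟨hil, hl⟩ := List.nodup_cons.mp hl
    have hil : i ∉ l.toFinset := by simpa using hil
    have hγi : (γ - ∑ j ∈ l.toFinset, Finsupp.single j (k j)) i = γ i := by
      simp [Finsupp.single_apply, hil]
    rw [List.map_cons, List.prod_cons, Module.End.mul_apply, ih hl, map_smul,
      pderiv_pow_monomial, hγi, smul_smul, List.toFinset_cons, prod_insert hil, sum_insert hil,
      tsub_tsub, add_comm (Finsupp.single i (k i)), Nat.cast_mul, mul_comm]

end PartialDerivatives

section DiagonalMaps

variable {σ R : Type*} [CommSemiring R]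

lemma smul_monomial_one_injective (γ : σ →₀ ℕ) :
    Function.Injective fun a : R => a • monomial γ (1 : R) := fun a b h => by
  classical simpa [coeff_monomial] using congrArg (coeff γ) h

lemma apply_eq_sum_smul_monomial_of_apply_monomial (T : MvPolynomial σ R →ₗ[R] MvPolynomial σ R)
    {t : (σ →₀ ℕ) → R} (ht : ∀ α, T (monomial α 1) = t α • monomial α 1) (p : MvPolynomial σ R) :
    T p = ∑ γ ∈ p.support, t γ • monomial γ (coeff γ p) := by
  conv_lhs => rw [p.as_sum, map_sum]
  refine sum_congr rfl fun γ _ => ?_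
  rw [← mul_one (coeff γ p), ← smul_eq_mul, ← smul_monomial, map_smul, ht, smul_comm]

end DiagonalMaps

variable {n : ℕ}

lemma pdPow_monomial (α γ : Fin n →₀ ℕ) (r : ℝ) :
    pdPow α (monomial γ r) = ((∏ i, (γ i).descFactorial (α i) : ℕ) : ℝ) • monomial (γ - α) r := by
  rw [pdPow, List.ofFn_eq_map, list_prod_map_pderiv_pow_monomial _ (List.nodup_finRange n),
    List.toFinset_finRange, Finsupp.univ_sum_single]

lemma monomial_mul_pdPow_monomial (α γ : Fin n →₀ ℕ) (r : ℝ) :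
    monomial α 1 * pdPow α (monomial γ r) =
      ((∏ i, ((α i).factorial : ℝ)) * ∏ i, ((γ i).choose (α i) : ℝ)) • monomial γ r := by
  rw [pdPow_monomial, mul_smul_comm, monomial_mul, one_mul]
  simp_rw [Nat.cast_prod, Nat.descFactorial_eq_factorial_mul_choose, Nat.cast_mul, prod_mul_distrib]
  by_cases hαγ : α ≤ γ
  · rw [add_tsub_cancel_of_le hαγ]
  · rw [prod_choose_eq_zero_of_not_le hαγ, mul_zero, zero_smul, zero_smul]

lemma smul_monomial_mul_pdPow_monomial (a : ℝ) (α γ : Fin n →₀ ℕ) (r : ℝ) :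
    (a / ∏ i, ((α i).factorial : ℝ)) • (monomial α 1 * pdPow α (monomial γ r)) =
      ((∏ i, ((γ i).choose (α i) : ℝ)) * a) • monomial γ r := by
  have hfact : ∏ i, ((α i).factorial : ℝ) ≠ 0 := by positivity
  rw [monomial_mul_pdPow_monomial, smul_smul]
  congr 1
  field_simp

lemma finsum_smul_monomial_mul_pdPow (c : (Fin n →₀ ℕ) → ℝ) (p : MvPolynomial (Fin n) ℝ) :
    ∑ᶠ α, (c α / ∏ i, ((α i).factorial : ℝ)) • (monomial α (1 : ℝ) * pdPow α p) =
      ∑ γ ∈ p.support, binomialTransform c γ • monomial γ (coeff γ p) := by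
  have hterm : ∀ α, (c α / ∏ i, ((α i).factorial : ℝ)) • (monomial α (1 : ℝ) * pdPow α p) =
      ∑ γ ∈ p.support, ((∏ i, ((γ i).choose (α i) : ℝ)) * c α) • monomial γ (coeff γ p) := by
    intro α
    conv_lhs => rw [p.as_sum, map_sum, mul_sum, smul_sum]
    exact sum_congr rfl fun γ _ => smul_monomial_mul_pdPow_monomial _ _ _ _
  have hfin : ∀ γ : Fin n →₀ ℕ,
      (Function.support fun α => (∏ i, ((γ i).choose (α i) : ℝ)) * c α).Finite :=
    fun γ => (Iic γ).finite_toSet.subset (support_prod_choose_mul_subset_Iic c γ)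
  simp_rw [hterm]
  rw [finsum_sum_comm _ _ fun γ _ => (hfin γ).subset fun _ => left_ne_zero_of_smul]
  refine sum_congr rfl fun γ _ => ?_
  rw [← finsum_smul' (hfin γ), finsum_prod_choose_mul_eq_binomialTransform]

section Representation

variable (T : MvPolynomial (Fin n) ℝ →ₗ[ℝ] MvPolynomial (Fin n) ℝ) {c : (Fin n →₀ ℕ) → ℝ}
  (hc : ∀ p, T p = ∑ᶠ α, (c α / ∏ i, ((α i).factorial : ℝ)) • (monomial α (1 : ℝ) * pdPow α p))
include hc

lemma apply_monomial_of_representation (γ : Fin n →₀ ℕ) :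
    T (monomial γ 1) = binomialTransform c γ • monomial γ 1 := by
  rw [hc, finsum_smul_monomial_mul_pdPow, support_monomial, if_neg one_ne_zero, sum_singleton]
  simp [coeff_monomial]

lemma eq_binomialTransform_of_representation {t : (Fin n →₀ ℕ) → ℝ}
    (ht : ∀ α, T (monomial α (1 : ℝ)) = t α • monomial α (1 : ℝ)) :
    t = binomialTransform c := by
  funext γ
  exact smul_monomial_one_injective γ ((ht γ).symm.trans (apply_monomial_of_representation T hc γ))

end Representation

theorem diagonal_representation_general (n : ℕ)
    (T : MvPolynomial (Fin n) ℝ →ₗ[ℝ] MvPolynomial (Fin n) ℝ) :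
    ((∃ t : (Fin n →₀ ℕ) → ℝ,
        ∀ α : Fin n →₀ ℕ, T (monomial α (1 : ℝ)) = t α • monomial α (1 : ℝ)) ↔
      (∃! c : (Fin n →₀ ℕ) → ℝ, ∀ p : MvPolynomial (Fin n) ℝ,
        T p = ∑ᶠ α, (c α / ∏ i, ((α i).factorial : ℝ)) • (monomial α (1 : ℝ) * pdPow α p))) ∧
    (∀ (t c : (Fin n →₀ ℕ) → ℝ),
      (∀ α : Fin n →₀ ℕ, T (monomial α (1 : ℝ)) = t α • monomial α (1 : ℝ)) →
      (∀ p : MvPolynomial (Fin n) ℝ,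
        T p = ∑ᶠ α, (c α / ∏ i, ((α i).factorial : ℝ)) • (monomial α (1 : ℝ) * pdPow α p)) →
      (∀ α : Fin n →₀ ℕ,
        t α = ∑ β ∈ Finset.Iic α, (∏ i, ((α i).choose (β i)) : ℝ) * c β) ∧
      (∀ α : Fin n →₀ ℕ,
        c α = ∑ β ∈ Finset.Iic α,
          (-1 : ℝ) ^ (∑ i, (α i - β i)) * (∏ i, ((α i).choose (β i)) : ℝ) * t β)) := by
  refine ⟨⟨fun ⟨t, ht⟩ => ⟨invBinomialTransform t, fun p => ?_, fun c hc => ?_⟩,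
    fun ⟨c, hc, _⟩ => ⟨_, apply_monomial_of_representation T hc⟩⟩, fun t c ht hc => ?_⟩
  · rw [finsum_smul_monomial_mul_pdPow, binomialTransform_invBinomialTransform]
    exact apply_eq_sum_smul_monomial_of_apply_monomial T ht p
  · rw [eq_binomialTransform_of_representation T hc ht, invBinomialTransform_binomialTransform]
  · obtain rfl := eq_binomialTransform_of_representation T hc ht
    exact ⟨fun α => rfl, fun α => (congrFun (invBinomialTransform_binomialTransform c) α).symm⟩

/-- A linear map `T` on `ℝ[x₁,…,xₙ]` is diagonal (`T x^α = t_α ⬝ x^α`) if and only if it has a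
representation `T = Σ_α (c_α/α!) ⬝ x^α ⬝ ∂^α` with a unique real sequence `(c_α)_α`; moreover the
two sequences are related by the binomial/inverse-binomial transform. -/
theorem diagonal_representation (n : ℕ) (hn : 0 < n)
    (T : MvPolynomial (Fin n) ℝ →ₗ[ℝ] MvPolynomial (Fin n) ℝ) :
    ((∃ t : (Fin n →₀ ℕ) → ℝ,
        ∀ α : Fin n →₀ ℕ, T (monomial α (1 : ℝ)) = t α • monomial α (1 : ℝ)) ↔
      (∃! c : (Fin n →₀ ℕ) → ℝ, ∀ p : MvPolynomial (Fin n) ℝ,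
        T p = ∑ᶠ α, (c α / ∏ i, ((α i).factorial : ℝ)) • (monomial α (1 : ℝ) * pdPow α p))) ∧
    (∀ (t c : (Fin n →₀ ℕ) → ℝ),
      (∀ α : Fin n →₀ ℕ, T (monomial α (1 : ℝ)) = t α • monomial α (1 : ℝ)) →
      (∀ p : MvPolynomial (Fin n) ℝ,
        T p = ∑ᶠ α, (c α / ∏ i, ((α i).factorial : ℝ)) • (monomial α (1 : ℝ) * pdPow α p)) →
      (∀ α : Fin n →₀ ℕ,
        t α = ∑ β ∈ Finset.Iic α, (∏ i, ((α i).choose (β i)) : ℝ) * c β) ∧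
      (∀ α : Fin n →₀ ℕ,
        c α = ∑ β ∈ Finset.Iic α,
          (-1 : ℝ) ^ (∑ i, (α i - β i)) * (∏ i, ((α i).choose (β i)) : ℝ) * t β)) :=
  diagonal_representation_general n T
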